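/- Let Γ be a countable discrete group with a measurable action on a measure space (X,ν), let Y ⊆ X be a domain of asymptotic expansion, let c ∈ (0,1), and let (Z_n)_{n∈ℕ} be a decreasing sequence of measurable subsets of Y with ν(Z_n) → 0. Then there exist N₀ ∈ ℕ, finite symmetric subsets S_n ⊆ Γ with 1 ∈ S_n for n > N₀, and an increasing sequence (Y_n)_{n>N₀} of measurable subsets of Y with ν(Y ∖ ⋃_{n>N₀} Y_n) = 0, such that each Y_n is a domain of (c, S_n)-expansion and Y_n ⊆ Y ∖ Z_n for every n > N₀. -/

import Mathlib

open MeasureTheory Set Filter Pointwise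

/-- The union `S · A = ⋃ s ∈ S, s • A` of the translates of `A` by elements of the
finite set `S ⊆ Γ`. -/
def finSMul {Γ X : Type*} [Group Γ] [MulAction Γ X] (S : Finset Γ) (A : Set X) : Set X :=
  ⋃ s ∈ S, s • A

/-- `S` is a finite symmetric subset of `Γ` containing the identity. -/
def SymmFin {Γ : Type*} [Group Γ] (S : Finset Γ) : Prop :=
  (1 : Γ) ∈ S ∧ ∀ s ∈ S, s⁻¹ ∈ S

/-- The `S`-boundary `∂_S A = (S·A) \ A`. -/
def finBdry {Γ X : Type*} [Group Γ] [MulAction Γ X] (S : Finset Γ) (A : Set X) : Set X :=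
  finSMul S A \ A

/-- `Y` is a domain of `(c,S)`-expansion: `ν((S·A) ∩ Y) > (1+c)·ν(A)` for every
measurable `A ⊆ Y` with `0 < ν(A) ≤ ν(Y)/2`. -/
def ExpandsOn {Γ X : Type*} [Group Γ] [MulAction Γ X] [MeasurableSpace X]
    (ν : MeasureTheory.Measure X) (Y : Set X) (c : ℝ) (S : Finset Γ) : Prop :=
  ∀ A : Set X, MeasurableSet A → A ⊆ Y → 0 < ν A → ν A ≤ ν Y / 2 →
    (1 + ENNReal.ofReal c) * ν A < ν (finSMul S A ∩ Y)

/-- `Y` is a domain of expansion: `(c,S)`-expansion for some `c > 0` and some finite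
symmetric `S ∋ 1`. -/
def ExpDomain (Γ : Type*) {X : Type*} [Group Γ] [MulAction Γ X] [MeasurableSpace X]
    (ν : MeasureTheory.Measure X) (Y : Set X) : Prop :=
  ∃ c : ℝ, 0 < c ∧ ∃ S : Finset Γ, SymmFin S ∧ ExpandsOn ν Y c S

/-- The `(α,c,S)` asymptotic-expansion estimate on `Y`: `ν((S·A) ∩ Y) > (1+c)·ν(A)` for
every measurable `A ⊆ Y` with `α·ν(Y) ≤ ν(A) ≤ ν(Y)/2`. -/
def AsymExpandsOn {Γ X : Type*} [Group Γ] [MulAction Γ X] [MeasurableSpace X]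
    (ν : MeasureTheory.Measure X) (Y : Set X) (α c : ℝ) (S : Finset Γ) : Prop :=
  ∀ A : Set X, MeasurableSet A → A ⊆ Y → ENNReal.ofReal α * ν Y ≤ ν A → ν A ≤ ν Y / 2 →
    (1 + ENNReal.ofReal c) * ν A < ν (finSMul S A ∩ Y)

/-- `Y` is a domain of asymptotic expansion. -/
def AsymExpDomain (Γ : Type*) {X : Type*} [Group Γ] [MulAction Γ X] [MeasurableSpace X]
    (ν : MeasureTheory.Measure X) (Y : Set X) : Prop :=
  ∀ α : ℝ, 0 < α → α ≤ 1 / 2 →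
    ∃ c : ℝ, 0 < c ∧ ∃ S : Finset Γ, SymmFin S ∧ AsymExpandsOn ν Y α c S

/-- The action of `Γ` on the probability space `(X,ν)` is strongly ergodic: every almost
invariant sequence of measurable sets is asymptotically trivial. -/
def StronglyErgodic (Γ : Type*) {X : Type*} [Group Γ] [MulAction Γ X] [MeasurableSpace X]
    (ν : MeasureTheory.Measure X) : Prop :=
  ∀ C : ℕ → Set X, (∀ n, MeasurableSet (C n)) →
    (∀ γ : Γ, Filter.Tendsto (fun n => ν (symmDiff (C n) (γ • C n))) Filter.atTop (nhds 0)) →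
    Filter.Tendsto (fun n => ν (C n) * (1 - ν (C n))) Filter.atTop (nhds 0)

/-- The action of `Γ` on `(X,ν)` is measure-class-preserving. -/
def MeasClassPres (Γ : Type*) {X : Type*} [Group Γ] [MulAction Γ X] [MeasurableSpace X]
    (ν : MeasureTheory.Measure X) : Prop :=
  ∀ (γ : Γ) (A : Set X), MeasurableSet A → (ν (γ • A) = 0 ↔ ν A = 0)

/-- The action of `Γ` on `(X,ν)` is ergodic: every invariant measurable set is null or
conull. -/
def ErgodicAct (Γ : Type*) {X : Type*} [Group Γ] [MulAction Γ X] [MeasurableSpace X]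
    (ν : MeasureTheory.Measure X) : Prop :=
  ∀ A : Set X, MeasurableSet A → (∀ γ : Γ, γ • A = A) → ν A = 0 ∨ ν Aᶜ = 0

/-- `W` admits an exhaustion by measurable subsets satisfying `P`. -/
def ExhaustionBy {X : Type*} [MeasurableSpace X] (ν : MeasureTheory.Measure X)
    (W : Set X) (P : Set X → Prop) : Prop :=
  ∃ Y : ℕ → Set X, Monotone Y ∧ (∀ n, MeasurableSet (Y n)) ∧ (∀ n, Y n ⊆ W) ∧
    (∀ n, P (Y n)) ∧ ν (W \ ⋃ n, Y n) = 0

/-!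
Iterating the asymptotic-expansion estimate, every set `E ⊆ Y` with `ν E ≥ α ν(Y)` grows past half
of `Y` under a fixed power `S^K`. The complement `D` of `S^(2K) E` in `Y` cannot do the same, since
`S^K D` and `S^K E` are disjoint by symmetry; so `S^(2K)` spreads `E` over all of `Y` up to measure
`α ν(Y)`, and only small sets can fail to expand. Given the previous domain `P ⊆ W = Y \ Z_n`,
remove from `W \ P` an essentially maximal set `D` that fails to expand, where expansion is
measured with the new generators outside `P` but with the old ones inside `P`: for this mixed
neighbourhood, failure to expand survives adjoining a further small non-expanding set, the overlap
inside `P` being paid for by the expansion of `P`. Spreading shows that `D` is small, and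
maximality that `W \ D` expands. Iterating with thresholds tending to `0` yields the increasing
exhaustion.
-/

open scoped ENNReal Topology

section Translates

variable {Γ X : Type*} [Group Γ] [MulAction Γ X] {S T : Finset Γ} {A B : Set X}

theorem mem_finSMul {x : X} : x ∈ finSMul S A ↔ ∃ s ∈ S, ∃ a ∈ A, s • a = x := by
  simp [finSMul, Set.mem_smul_set]

@[gcongr]
theorem finSMul_mono (hST : S ⊆ T) (hAB : A ⊆ B) : finSMul S A ⊆ finSMul T B := by
  intro x hx
  obtain ⟨s, hs, a, ha, rfl⟩ := mem_finSMul.1 hx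
  exact mem_finSMul.2 ⟨s, hST hs, a, hAB ha, rfl⟩

theorem subset_finSMul (h : (1 : Γ) ∈ S) : A ⊆ finSMul S A :=
  fun x hx => mem_finSMul.2 ⟨1, h, x, hx, one_smul Γ x⟩

theorem finSMul_one : finSMul (1 : Finset Γ) A = A := by
  simp [finSMul]

theorem finSMul_mul [DecidableEq Γ] : finSMul (S * T) A = finSMul S (finSMul T A) := by
  ext x
  simp only [mem_finSMul, Finset.mem_mul]
  constructor
  · rintro ⟨_, ⟨s, hs, t, ht, rfl⟩, a, ha, rfl⟩
    exact ⟨s, hs, t • a, ⟨t, ht, a, ha, rfl⟩, (mul_smul s t a).symm⟩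
  · rintro ⟨s, hs, _, ⟨t, ht, a, ha, rfl⟩, rfl⟩
    exact ⟨s * t, ⟨s, hs, t, ht, rfl⟩, a, ha, mul_smul s t a⟩

theorem finSMul_iUnion (A : ℕ → Set X) : finSMul S (⋃ n, A n) = ⋃ n, finSMul S (A n) := by
  ext x
  simp only [mem_finSMul, Set.mem_iUnion]
  grind

theorem disjoint_finSMul [DecidableEq Γ] (hS : ∀ s ∈ S, s⁻¹ ∈ S)
    (h : Disjoint A (finSMul (S * S) B)) : Disjoint (finSMul S A) (finSMul S B) := by
  refine Set.disjoint_left.2 fun x hxA hxB => ?_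
  obtain ⟨s, hs, a, ha, rfl⟩ := mem_finSMul.1 hxA
  obtain ⟨t, ht, b, hb, hab⟩ := mem_finSMul.1 hxB
  refine Set.disjoint_left.1 h ha
    (mem_finSMul.2 ⟨s⁻¹ * t, Finset.mul_mem_mul (hS s hs) ht, b, hb, ?_⟩)
  rw [mul_smul, hab, inv_smul_smul]

theorem SymmFin.pow [DecidableEq Γ] (hS : SymmFin S) (n : ℕ) : SymmFin (S ^ n) := by
  have hinv : S⁻¹ ⊆ S := fun s hs => inv_inv s ▸ hS.2 _ (Finset.mem_inv'.1 hs)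
  refine ⟨Finset.one_mem_pow hS.1, fun s hs => ?_⟩
  have := Finset.inv_mem_inv hs
  rw [← inv_pow] at this
  exact Finset.pow_subset_pow_left hinv this

theorem MeasurableSet.finSMul [MeasurableSpace X] [MeasurableConstSMul Γ X]
    (hA : MeasurableSet A) : MeasurableSet (finSMul S A) :=
  Finset.measurableSet_biUnion S fun s _ => hA.const_smul s

end Translates

section Spreading

variable {Γ X : Type*} [Group Γ] [MulAction Γ X] [MeasurableSpace X] {ν : Measure X}
  {Y V A : Set X} {S T : Finset Γ} {a b : ℝ≥0∞} {c : ℝ}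

def Spreads (ν : Measure X) (Y V : Set X) (T : Finset Γ) (a b : ℝ≥0∞) : Prop :=
  ∀ A, MeasurableSet A → A ⊆ V → a ≤ ν A → ν Y ≤ ν (finSMul T A ∩ V) + b

theorem Spreads.mono (h : Spreads ν Y V S a b) (hST : S ⊆ T) : Spreads ν Y V T a b :=
  fun A hAm hAV hA => (h A hAm hAV hA).trans (by gcongr)

theorem Spreads.restrict (h : Spreads ν Y Y T a b) (hVY : V ⊆ Y) :
    Spreads ν Y V T a (ν (Y \ V) + b) := by
  intro A hAm hAV hA
  have hcover : finSMul T A ∩ Y ⊆ (finSMul T A ∩ V) ∪ (Y \ V) := by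
    intro x ⟨hxA, hxY⟩
    by_cases hxV : x ∈ V
    · exact Or.inl ⟨hxA, hxV⟩
    · exact Or.inr ⟨hxY, hxV⟩
  calc ν Y ≤ ν (finSMul T A ∩ Y) + b := h A hAm (hAV.trans hVY) hA
    _ ≤ ν (finSMul T A ∩ V) + ν (Y \ V) + b := by
      gcongr
      exact (measure_mono hcover).trans (measure_union_le _ _)
    _ = ν (finSMul T A ∩ V) + (ν (Y \ V) + b) := add_assoc _ _ _

theorem Spreads.lt_measure_finSMul (h : Spreads ν Y V T a b) (hVY : V ⊆ Y)
    (hgap : (1 + ENNReal.ofReal c) * (ν Y / 2) + b < ν Y) (hAm : MeasurableSet A) (hAV : A ⊆ V)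
    (hA : a ≤ ν A) (hAhalf : ν A ≤ ν V / 2) :
    (1 + ENNReal.ofReal c) * ν A < ν (finSMul T A ∩ V) := by
  by_contra! hAexp
  refine hgap.not_ge ((h A hAm hAV hA).trans ?_)
  gcongr
  exact hAexp.trans (by gcongr; exact hAhalf.trans (by gcongr))

theorem spreads_empty (ha : a ≠ 0) : Spreads ν Y ∅ T a b := by
  intro A _ hA h
  rw [Set.subset_empty_iff.1 hA, measure_empty] at h
  exact absurd (le_zero_iff.1 h) ha

theorem expandsOn_empty : ExpandsOn ν ∅ c T := by
  intro A _ hA h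
  simp [Set.subset_empty_iff.1 hA] at h

end Spreading

section Amplification

variable {Γ X : Type*} [Group Γ] [DecidableEq Γ] [MulAction Γ X] [MeasurableSpace X]
  [MeasurableConstSMul Γ X] {ν : Measure X} {Y : Set X} {α c : ℝ} {S : Finset Γ}

theorem AsymExpandsOn.half_lt_or_pow_mul_le (hexp : AsymExpandsOn ν Y α c S) (hS : (1 : Γ) ∈ S)
    (hYm : MeasurableSet Y) {A : Set X} (hAm : MeasurableSet A) (hAY : A ⊆ Y)
    (hA : ENNReal.ofReal α * ν Y ≤ ν A) (n : ℕ) :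
    ν Y / 2 < ν (finSMul (S ^ n) A ∩ Y) ∨
      (1 + ENNReal.ofReal c) ^ n * ν A ≤ ν (finSMul (S ^ n) A ∩ Y) := by
  induction n with
  | zero => simp [finSMul_one, Set.inter_eq_left.2 hAY]
  | succ n ih =>
    set B := finSMul (S ^ n) A ∩ Y
    have hBm : MeasurableSet B := hAm.finSMul.inter hYm
    have hAB : A ⊆ B := Set.subset_inter (subset_finSMul (Finset.one_mem_pow hS)) hAY
    have hstep : finSMul S B ∩ Y ⊆ finSMul (S ^ (n + 1)) A ∩ Y := by
      rw [pow_succ', finSMul_mul]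
      gcongr
      exact Set.inter_subset_left
    have hBB : ν B ≤ ν (finSMul (S ^ (n + 1)) A ∩ Y) :=
      measure_mono ((Set.subset_inter (subset_finSMul hS) Set.inter_subset_right).trans hstep)
    by_cases hhalf : ν B ≤ ν Y / 2
    · refine ih.imp (fun h => h.trans_le hBB) fun h => ?_
      calc (1 + ENNReal.ofReal c) ^ (n + 1) * ν A
          = (1 + ENNReal.ofReal c) * ((1 + ENNReal.ofReal c) ^ n * ν A) := by ring
        _ ≤ (1 + ENNReal.ofReal c) * ν B := by gcongr
        _ ≤ ν (finSMul S B ∩ Y) :=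
          (hexp B hBm Set.inter_subset_right (hA.trans (measure_mono hAB)) hhalf).le
        _ ≤ _ := measure_mono hstep
    · exact Or.inl ((not_le.1 hhalf).trans_le hBB)

theorem AsymExpandsOn.exists_half_lt (hexp : AsymExpandsOn ν Y α c S) (hS : (1 : Γ) ∈ S)
    (hYm : MeasurableSet Y) (hY0 : ν Y ≠ 0) (hYfin : ν Y ≠ ∞) (hα : 0 < α) (hc : 0 < c) :
    ∃ K : ℕ, ∀ A, MeasurableSet A → A ⊆ Y → ENNReal.ofReal α * ν Y ≤ ν A →
      ν Y / 2 < ν (finSMul (S ^ K) A ∩ Y) := by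
  have hpos : ENNReal.ofReal α * ν Y ≠ 0 := by positivity
  have hgrow : Tendsto (fun n : ℕ => (1 + ENNReal.ofReal c) ^ n * (ENNReal.ofReal α * ν Y))
      atTop (𝓝 ∞) := by
    have h1 : 1 < 1 + ENNReal.ofReal c :=
      ENNReal.lt_add_right ENNReal.one_ne_top (ENNReal.ofReal_pos.2 hc).ne'
    simpa [ENNReal.top_mul hpos] using ENNReal.Tendsto.mul_const (b := ENNReal.ofReal α * ν Y)
      (ENNReal.tendsto_pow_atTop_nhds_top_iff.2 h1) (Or.inl ENNReal.top_ne_zero)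
  obtain ⟨K, hK⟩ := (hgrow.eventually (eventually_gt_nhds hYfin.lt_top)).exists
  refine ⟨K, fun A hAm hAY hA => ?_⟩
  refine (hexp.half_lt_or_pow_mul_le hS hYm hAm hAY hA K).resolve_right fun h => ?_
  have : (1 + ENNReal.ofReal c) ^ K * (ENNReal.ofReal α * ν Y) ≤ ν Y :=
    calc _ ≤ (1 + ENNReal.ofReal c) ^ K * ν A := by gcongr
      _ ≤ _ := h
      _ ≤ ν Y := measure_mono Set.inter_subset_right
  exact hK.not_ge this

theorem AsymExpDomain.exists_spreads (hdom : AsymExpDomain Γ ν Y) (hYm : MeasurableSet Y)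
    (hY0 : ν Y ≠ 0) (hYfin : ν Y ≠ ∞) (hα : 0 < α) (hα' : α ≤ 1 / 2) :
    ∃ T : Finset Γ, SymmFin T ∧
      Spreads ν Y Y T (ENNReal.ofReal α * ν Y) (ENNReal.ofReal α * ν Y) := by
  obtain ⟨c, hc, S, hS, hexp⟩ := hdom α hα hα'
  obtain ⟨K, hK⟩ := hexp.exists_half_lt hS.1 hYm hY0 hYfin hα hc
  refine ⟨S ^ (K + K), hS.pow _, fun E hEm hEY hE => ?_⟩
  set D := Y \ finSMul (S ^ (K + K)) E
  have hD : ν D ≤ ENNReal.ofReal α * ν Y := by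
    by_contra! hD
    have hdisj : Disjoint (finSMul (S ^ K) D ∩ Y) (finSMul (S ^ K) E ∩ Y) := by
      refine (disjoint_finSMul (hS.pow K).2 ?_).mono Set.inter_subset_left Set.inter_subset_left
      rw [← pow_add]
      exact Set.disjoint_sdiff_left
    have h := ENNReal.add_lt_add (hK D (hYm.diff hEm.finSMul) Set.sdiff_subset hD.le)
      (hK E hEm hEY hE)
    rw [ENNReal.add_halves, ← measure_union hdisj (hEm.finSMul.inter hYm)] at h
    exact h.not_ge (measure_mono (Set.union_subset Set.inter_subset_right Set.inter_subset_right))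
  calc ν Y ≤ ν (Y ∩ finSMul (S ^ (K + K)) E) + ν D := measure_le_inter_add_sdiff ν Y _
    _ ≤ ν (finSMul (S ^ (K + K)) E ∩ Y) + ENNReal.ofReal α * ν Y := by
      rw [Set.inter_comm]
      gcongr

theorem AsymExpDomain.exists_spreads_seq (hdom : AsymExpDomain Γ ν Y) (hYm : MeasurableSet Y)
    (hY0 : ν Y ≠ 0) (hYfin : ν Y ≠ ∞) {ε : ℝ} (hε0 : 0 < ε) (hε : ε ≤ 1 / 2) :
    ∃ (T : ℕ → Finset Γ) (a : ℕ → ℝ≥0∞), Monotone T ∧ Antitone a ∧ Tendsto a atTop (𝓝 0) ∧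
      (∀ n, a n ≠ 0) ∧ (∀ n, a n ≤ ENNReal.ofReal ε * ν Y) ∧ (∀ n, SymmFin (T n)) ∧
      ∀ n, Spreads ν Y Y (T n) (a n) (a n) := by
  have hα0 (n : ℕ) : 0 < ε * 2⁻¹ ^ n := by positivity
  have hαε (n : ℕ) : ε * 2⁻¹ ^ n ≤ ε :=
    mul_le_of_le_one_right hε0.le (pow_le_one₀ (by norm_num) (by norm_num))
  choose S hS hSspr using fun n => hdom.exists_spreads hYm hY0 hYfin (hα0 n) ((hαε n).trans hε)
  refine ⟨fun n => (Finset.range (n + 1)).biUnion S, fun n => ENNReal.ofReal (ε * 2⁻¹ ^ n) * ν Y,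
    fun m n hmn => ?_, fun m n hmn => ?_, ?_, fun n => ?_, fun n => ?_, fun n => ⟨?_, ?_⟩,
    fun n => ?_⟩
  · exact Finset.biUnion_subset_biUnion_of_subset_left _ (Finset.range_subset_range.2 (by omega))
  · refine mul_le_mul_left (ENNReal.ofReal_le_ofReal (mul_le_mul_of_nonneg_left ?_ hε0.le)) _
    exact pow_le_pow_of_le_one (by norm_num) (by norm_num) hmn
  · simpa using ENNReal.Tendsto.mul_const (ENNReal.tendsto_ofReal
      ((tendsto_pow_atTop_nhds_zero_of_lt_one (by norm_num : (0 : ℝ) ≤ 2⁻¹)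
        (by norm_num)).const_mul ε)) (Or.inr hYfin)
  · simp [hY0, hε0]
  · exact mul_le_mul_left (ENNReal.ofReal_le_ofReal (hαε n)) _
  · exact Finset.mem_biUnion.2 ⟨0, by simp, (hS 0).1⟩
  · simp only [Finset.mem_biUnion]
    exact fun s ⟨k, hk, hs⟩ => ⟨k, hk, (hS k).2 s hs⟩
  · exact (hSspr n).mono (Finset.subset_biUnion_of_mem S (by simp))

end Amplification

section Maximal

theorem exists_monotone_seq {α : Type*} [Preorder α] {Q : ℕ → α → Prop} {a₀ : α} (h₀ : Q 0 a₀)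
    (hstep : ∀ n a, Q n a → ∃ b, a ≤ b ∧ Q (n + 1) b) :
    ∃ f : ℕ → α, Monotone f ∧ ∀ n, Q n (f n) := by
  choose g hg using hstep
  let f : (n : ℕ) → {a // Q n a} := fun n =>
    Nat.rec ⟨a₀, h₀⟩ (fun n a => ⟨g n a.1 a.2, (hg n a.1 a.2).2⟩) n
  exact ⟨fun n => (f n).1, monotone_nat_of_le_succ fun n => (hg n _ (f n).2).1, fun n => (f n).2⟩

/-- A countable substitute for Zorn's lemma: climb greedily, each time to within `1 / n` of the
supremum of `m` above the current element. -/
theorem exists_maximal_of_monotone_seq {α : Type*} [Preorder α] {F : Set α} {m : α → ℝ≥0∞}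
    (hm : Monotone m) {p₀ : α} (hp₀ : p₀ ∈ F) {L : ℝ≥0∞} (hL : L ≠ ∞) (hbdd : ∀ p ∈ F, m p ≤ L)
    (hseq : ∀ f : ℕ → α, Monotone f → (∀ n, f n ∈ F) → ∃ u ∈ F, ∀ n, f n ≤ u) :
    ∃ p ∈ F, ∀ q ∈ F, p ≤ q → m q ≤ m p := by
  let g : α → ℝ≥0∞ := fun p => ⨆ (q ∈ F) (_ : p ≤ q), m q
  have hle_g {p q : α} (hq : q ∈ F) (hpq : p ≤ q) : m q ≤ g p :=
    le_iSup₂_of_le q hq (le_iSup_of_le hpq le_rfl)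
  have hg_anti {p p' : α} (h : p ≤ p') : g p' ≤ g p :=
    iSup₂_le fun q hq => iSup_le fun hpq => hle_g hq (h.trans hpq)
  have hclose (p : α) (hp : p ∈ F) (ε : ℝ≥0∞) (hε : ε ≠ 0) :
      ∃ q ∈ F, p ≤ q ∧ g q ≤ m q + ε := by
    rcases eq_or_ne (g p) 0 with h0 | h0
    · exact ⟨p, hp, le_rfl, (hg_anti le_rfl).trans (h0.le.trans zero_le)⟩
    have hgfin : g p ≠ ∞ :=
      ne_top_of_le_ne_top hL (iSup₂_le fun q hq => iSup_le fun _ => hbdd q hq)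
    have hlt : g p - ε < ⨆ (q ∈ F) (_ : p ≤ q), m q := ENNReal.sub_lt_self hgfin h0 hε
    simp only [lt_iSup_iff] at hlt
    obtain ⟨q, hq, hpq, hlt⟩ := hlt
    exact ⟨q, hq, hpq, (hg_anti hpq).trans (tsub_le_iff_right.1 hlt.le)⟩
  obtain ⟨f, hf, hfQ⟩ := exists_monotone_seq (Q := fun n p => p ∈ F ∧ g p ≤ m p + (n : ℝ≥0∞)⁻¹)
    (a₀ := p₀) ⟨hp₀, by simp⟩ fun n p hp => by
      obtain ⟨q, hq, hpq, hgq⟩ :=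
        hclose p hp.1 _ (ENNReal.inv_ne_zero.2 (ENNReal.natCast_ne_top _))
      exact ⟨q, hpq, hq, hgq⟩
  obtain ⟨u, hu, hfu⟩ := hseq f hf fun n => (hfQ n).1
  have hgu : g u ≤ m u := by
    refine ge_of_tendsto' (by simpa using ENNReal.tendsto_inv_nat_nhds_zero.const_add (m u))
      fun n => ?_
    calc g u ≤ g (f n) := hg_anti (hfu n)
      _ ≤ m (f n) + (n : ℝ≥0∞)⁻¹ := (hfQ n).2
      _ ≤ m u + (n : ℝ≥0∞)⁻¹ := by gcongr; exact hm (hfu n)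
  exact ⟨u, hu, fun q hq huq => (hle_g hq huq).trans hgu⟩

end Maximal

theorem MeasureTheory.measure_le_mul_union_of_le_inter {X : Type*} [MeasurableSpace X]
    {μ : Measure X} {D A M M' U : Set X} {K : ℝ≥0∞} (hU : U ⊆ M ∪ M') (hM : μ M ≤ K * μ D)
    (hM' : μ M' ≤ K * μ A) (hDA : K * μ (D ∩ A) ≤ μ (M ∩ M')) (hAm : MeasurableSet A)
    (hM'm : MeasurableSet M') (hfin : μ (M ∩ M') ≠ ∞) : μ U ≤ K * μ (D ∪ A) := by
  refine ENNReal.le_of_add_le_add_right hfin ?_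
  calc μ U + μ (M ∩ M') ≤ μ (M ∪ M') + μ (M ∩ M') := by gcongr
    _ = μ M + μ M' := measure_union_add_inter M hM'm
    _ ≤ K * μ D + K * μ A := add_le_add hM hM'
    _ = K * μ (D ∪ A) + K * μ (D ∩ A) := by
      rw [← mul_add, ← mul_add, measure_union_add_inter D hAm]
    _ ≤ K * μ (D ∪ A) + μ (M ∩ M') := by gcongr

section MixedNbhd

variable {Γ X : Type*} [Group Γ] [MulAction Γ X] {W P D A : Set X} {Tp Tk : Finset Γ}

/-- Inside `P` only the generators `Tp` of `P`'s own expansion are used, so that this expansion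
can pay for overlaps (see `MixedNonexpanding.union`). -/
def mixedNbhd (Tp Tk : Finset Γ) (W P D : Set X) : Set X :=
  (finSMul Tk (D \ P) ∩ W) ∪ (finSMul Tp (D ∩ P) ∩ P)

theorem mixedNbhd_union_subset (hT : Tp ⊆ Tk) (hTk : (1 : Γ) ∈ Tk) (hPW : P ⊆ W) :
    mixedNbhd Tp Tk W P (D ∪ A) ⊆
      mixedNbhd Tp Tk W P D ∪ (finSMul Tk A ∩ (W \ (D \ P))) := by
  rintro x (⟨hx, hxW⟩ | ⟨hx, hxP⟩)
  · obtain ⟨s, hs, y, ⟨hyD | hyA, hyP⟩, rfl⟩ := mem_finSMul.1 hx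
    · exact Or.inl (Or.inl ⟨mem_finSMul.2 ⟨s, hs, y, ⟨hyD, hyP⟩, rfl⟩, hxW⟩)
    by_cases hxB : s • y ∈ D \ P
    · exact Or.inl (Or.inl ⟨subset_finSMul hTk hxB, hxW⟩)
    · exact Or.inr ⟨mem_finSMul.2 ⟨s, hs, y, hyA, rfl⟩, hxW, hxB⟩
  · obtain ⟨s, hs, y, ⟨hyD | hyA, hyP⟩, rfl⟩ := mem_finSMul.1 hx
    · exact Or.inl (Or.inr ⟨mem_finSMul.2 ⟨s, hs, y, ⟨hyD, hyP⟩, rfl⟩, hxP⟩)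
    · exact Or.inr ⟨mem_finSMul.2 ⟨s, hT hs, y, hyA, rfl⟩, hPW hxP, fun h => h.2 hxP⟩

end MixedNbhd

section Stage

variable {Γ X : Type*} [Group Γ] [MulAction Γ X] [MeasurableSpace X] {ν : Measure X}
  {Y W P D A : Set X} {Tp Tk : Finset Γ} {c : ℝ} {ak ap bp : ℝ≥0∞}

/-- Candidates for the part of `W` that fails to expand; only `D \ P` is removed from `W`. -/
structure MixedNonexpanding (ν : Measure X) (c : ℝ) (Tp Tk : Finset Γ) (W P : Set X)
    (ak : ℝ≥0∞) (D : Set X) : Prop where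
  measurableSet : MeasurableSet D
  subset : D ⊆ W
  measure_sdiff_le : ν (D \ P) ≤ 2 * ak
  measure_inter_le : ν (D ∩ P) ≤ ν P / 2
  measure_mixedNbhd_le : ν (mixedNbhd Tp Tk W P D) ≤ (1 + ENNReal.ofReal c) * ν D

theorem mixedNonexpanding_empty : MixedNonexpanding ν c Tp Tk W P ak ∅ where
  measurableSet := .empty
  subset := Set.empty_subset W
  measure_sdiff_le := by simp
  measure_inter_le := by simp
  measure_mixedNbhd_le := by simp [mixedNbhd, finSMul]

theorem MixedNonexpanding.iUnion {f : ℕ → Set X} (hf : Monotone f)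
    (h : ∀ n, MixedNonexpanding ν c Tp Tk W P ak (f n)) :
    MixedNonexpanding ν c Tp Tk W P ak (⋃ n, f n) := by
  have hsup {g : ℕ → Set X} (hg : Monotone g) {b : ℝ≥0∞} (hb : ∀ n, ν (g n) ≤ b) :
      ν (⋃ n, g n) ≤ b := by
    rw [hg.measure_iUnion]
    exact iSup_le hb
  refine ⟨.iUnion fun n => (h n).measurableSet, Set.iUnion_subset fun n => (h n).subset, ?_, ?_, ?_⟩
  · rw [Set.iUnion_sdiff]
    exact hsup (fun m n hmn => Set.sdiff_subset_sdiff_left (hf hmn))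
      fun n => (h n).measure_sdiff_le
  · rw [Set.iUnion_inter]
    exact hsup (fun m n hmn => Set.inter_subset_inter_left _ (hf hmn))
      fun n => (h n).measure_inter_le
  · have : mixedNbhd Tp Tk W P (⋃ n, f n) = ⋃ n, mixedNbhd Tp Tk W P (f n) := by
      simp only [mixedNbhd, Set.iUnion_sdiff, Set.iUnion_inter, finSMul_iUnion,
        Set.iUnion_union_distrib]
    rw [this]
    refine hsup (fun m n hmn => ?_) fun n => (h n).measure_mixedNbhd_le.trans ?_
    · unfold mixedNbhd
      gcongr <;> exact hf hmn
    · gcongr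
      exact Set.subset_iUnion f n

theorem MixedNonexpanding.measure_mixedNbhd_le_of_subset
    (hD : MixedNonexpanding ν c Tp Tk W P ak D) (hPY : P ⊆ Y) :
    ν (mixedNbhd Tp Tk W P D) ≤ (1 + ENNReal.ofReal c) * (2 * ak + ν Y / 2) := by
  refine hD.measure_mixedNbhd_le.trans ?_
  gcongr
  calc ν D ≤ ν (D ∩ P) + ν (D \ P) := measure_le_inter_add_sdiff ν D P
    _ ≤ ν Y / 2 + 2 * ak := add_le_add (hD.measure_inter_le.trans (by gcongr)) hD.measure_sdiff_le
    _ = 2 * ak + ν Y / 2 := add_comm _ _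

theorem MixedNonexpanding.measure_sdiff_lt (hD : MixedNonexpanding ν c Tp Tk W P ak D)
    (hPm : MeasurableSet P) (hWY : W ⊆ Y) (hPY : P ⊆ Y) (hamp : Spreads ν Y Y Tk ak ak)
    (hgap : (1 + ENNReal.ofReal c) * (2 * ak + ν Y / 2) + (ν (Y \ W) + 2 * ak) < ν Y) :
    ν (D \ P) < ak := by
  by_contra! h
  refine hgap.not_ge ?_
  calc ν Y ≤ ν (finSMul Tk (D \ P) ∩ W) + (ν (Y \ W) + ak) :=
        hamp.restrict hWY _ (hD.measurableSet.diff hPm) (Set.sdiff_subset.trans hD.subset) h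
    _ ≤ ν (mixedNbhd Tp Tk W P D) + (ν (Y \ W) + 2 * ak) := by
        gcongr
        · exact Set.subset_union_left
        · rw [two_mul]; exact le_add_self
    _ ≤ _ := by gcongr; exact hD.measure_mixedNbhd_le_of_subset hPY

theorem MixedNonexpanding.measure_inter_lt (hD : MixedNonexpanding ν c Tp Tk W P ak D)
    (hPm : MeasurableSet P) (hPY : P ⊆ Y) (hPspr : Spreads ν Y P Tp ap bp)
    (hgap : (1 + ENNReal.ofReal c) * (2 * ak + ν Y / 2) + bp < ν Y) :
    ν (D ∩ P) < ap := by
  by_contra! h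
  refine hgap.not_ge ?_
  calc ν Y ≤ ν (finSMul Tp (D ∩ P) ∩ P) + bp :=
        hPspr _ (hD.measurableSet.inter hPm) Set.inter_subset_right h
    _ ≤ ν (mixedNbhd Tp Tk W P D) + bp := by gcongr; exact Set.subset_union_right
    _ ≤ _ := by gcongr; exact hD.measure_mixedNbhd_le_of_subset hPY

variable [MeasurableConstSMul Γ X]

theorem MixedNonexpanding.union (hD : MixedNonexpanding ν c Tp Tk W P ak D)
    (hWm : MeasurableSet W) (hWfin : ν W ≠ ∞) (hPm : MeasurableSet P) (hPW : P ⊆ W)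
    (hT : Tp ⊆ Tk) (hTk : (1 : Γ) ∈ Tk) (hak : ak ≤ ap) (hPexp : ExpandsOn ν P c Tp)
    (hPsmall : ∀ A ⊆ P, ν A ≤ 2 * ap → ν A ≤ ν P / 2) (hB : ν (D \ P) ≤ ak)
    (hDP : ν (D ∩ P) ≤ ap) (hAm : MeasurableSet A) (hAV : A ⊆ W \ (D \ P)) (hA : ν A ≤ ak)
    (hAexp : ν (finSMul Tk A ∩ (W \ (D \ P))) ≤ (1 + ENNReal.ofReal c) * ν A) :
    MixedNonexpanding ν c Tp Tk W P ak (D ∪ A) := by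
  have hDAP : D ∩ A ⊆ P := fun x ⟨hxD, hxA⟩ => by_contra fun hxP => (hAV hxA).2 ⟨hxD, hxP⟩
  have hA2 : ν A ≤ 2 * ap := hA.trans (hak.trans (by rw [two_mul]; exact le_add_self))
  refine ⟨hD.measurableSet.union hAm, Set.union_subset hD.subset (hAV.trans Set.sdiff_subset),
    ?_, ?_, ?_⟩
  · calc ν ((D ∪ A) \ P) ≤ ν (D \ P ∪ A) := by
          gcongr
          rw [Set.union_sdiff_distrib]
          gcongr
          exact Set.sdiff_subset
      _ ≤ ν (D \ P) + ν A := measure_union_le _ _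
      _ ≤ 2 * ak := by rw [two_mul]; exact add_le_add hB hA
  · refine hPsmall _ Set.inter_subset_right ?_
    calc ν ((D ∪ A) ∩ P) ≤ ν (D ∩ P ∪ A) := by
          gcongr
          rw [Set.union_inter_distrib_right]
          gcongr
          exact Set.inter_subset_left
      _ ≤ ν (D ∩ P) + ν A := measure_union_le _ _
      _ ≤ 2 * ap := by rw [two_mul]; exact add_le_add hDP (hA.trans hak)
  refine measure_le_mul_union_of_le_inter (mixedNbhd_union_subset hT hTk hPW)
    hD.measure_mixedNbhd_le hAexp ?_ hAm
    (hAm.finSMul.inter (hWm.diff (hD.measurableSet.diff hPm))) ?_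
  · rcases eq_or_ne (ν (D ∩ A)) 0 with h0 | h0
    · simp [h0]
    refine (hPexp _ (hD.measurableSet.inter hAm) hDAP (pos_iff_ne_zero.2 h0)
      (hPsmall _ hDAP ((measure_mono Set.inter_subset_right).trans hA2))).le.trans
      (measure_mono (Set.subset_inter (Set.subset_union_of_subset_right ?_ _) ?_))
    · exact Set.inter_subset_inter_left _
        (finSMul_mono subset_rfl (Set.subset_inter Set.inter_subset_left hDAP))
    · gcongr
      · exact Set.inter_subset_right
      · exact fun x hx => ⟨hPW hx, fun h => h.2 hx⟩
  · exact ne_top_of_le_ne_top hWfin (measure_mono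
      (Set.inter_subset_right.trans (Set.inter_subset_right.trans Set.sdiff_subset)))

theorem MixedNonexpanding.lt_measure_finSMul_of_maximal
    (hD : MixedNonexpanding ν c Tp Tk W P ak D)
    (hDmax : ∀ D', MixedNonexpanding ν c Tp Tk W P ak D' → D ⊆ D' → ν D' ≤ ν D)
    (hWm : MeasurableSet W) (hWfin : ν W ≠ ∞) (hPm : MeasurableSet P) (hPW : P ⊆ W)
    (hT : Tp ⊆ Tk) (hTk : (1 : Γ) ∈ Tk) (hak : ak ≤ ap) (hPexp : ExpandsOn ν P c Tp)
    (hPsmall : ∀ A ⊆ P, ν A ≤ 2 * ap → ν A ≤ ν P / 2) (hB : ν (D \ P) ≤ ak)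
    (hDP : ν (D ∩ P) ≤ ap) (hAm : MeasurableSet A) (hAV : A ⊆ W \ (D \ P)) (hA0 : 0 < ν A)
    (hA : ν A ≤ ak) :
    (1 + ENNReal.ofReal c) * ν A < ν (finSMul Tk A ∩ (W \ (D \ P))) := by
  by_contra! hAexp
  have hAD : ν (A \ D) = 0 := by
    have h := hDmax _ (hD.union hWm hWfin hPm hPW hT hTk hak hPexp hPsmall hB hDP hAm hAV hA
      hAexp) Set.subset_union_left
    rw [← Set.union_sdiff_self,
      measure_union Set.disjoint_sdiff_right (hAm.diff hD.measurableSet)] at h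
    have hDfin : ν D ≠ ∞ := ne_top_of_le_ne_top hWfin (measure_mono hD.subset)
    exact le_zero_iff.1 (ENNReal.le_of_add_le_add_left hDfin (h.trans_eq (add_zero _).symm))
  have hAP : ν (A \ P) = 0 := by
    refine measure_mono_null (fun x hx => ?_) hAD
    exact ⟨hx.1, fun hxD => (hAV hx.1).2 ⟨hxD, hx.2⟩⟩
  have hAAP : ν A ≤ ν (A ∩ P) := by
    simpa [hAP] using measure_le_inter_add_sdiff ν A P
  have h := hPexp (A ∩ P) (hAm.inter hPm) Set.inter_subset_right (hA0.trans_le hAAP)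
    (hPsmall _ Set.inter_subset_right ((measure_mono Set.inter_subset_left).trans
      (hA.trans (hak.trans (le_mul_of_one_le_left' one_le_two)))))
  refine (h.trans_le ((measure_mono ?_).trans (hAexp.trans (by gcongr)))).false
  gcongr
  · exact Set.inter_subset_left
  · exact fun x hx => ⟨hPW hx, fun h => h.2 hx⟩

theorem exists_expandsOn_between (hWm : MeasurableSet W) (hPm : MeasurableSet P) (hPW : P ⊆ W)
    (hWY : W ⊆ Y) (hYfin : ν Y ≠ ∞) (hT : Tp ⊆ Tk) (hTk : (1 : Γ) ∈ Tk) (hak : ak ≤ ap)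
    (hPexp : ExpandsOn ν P c Tp) (hPspr : Spreads ν Y P Tp ap bp)
    (hPsmall : ∀ A ⊆ P, ν A ≤ 2 * ap → ν A ≤ ν P / 2) (hamp : Spreads ν Y Y Tk ak ak)
    (hgapP : (1 + ENNReal.ofReal c) * (2 * ak + ν Y / 2) + bp < ν Y)
    (hgapW : (1 + ENNReal.ofReal c) * (2 * ak + ν Y / 2) + (ν (Y \ W) + 2 * ak) < ν Y) :
    ∃ V, MeasurableSet V ∧ P ⊆ V ∧ V ⊆ W ∧ ν (Y \ V) ≤ ν (Y \ W) + ak ∧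
      ExpandsOn ν V c Tk := by
  have hPY := hPW.trans hWY
  obtain ⟨D, hD, hDmax⟩ := exists_maximal_of_monotone_seq
    (F := {D | MixedNonexpanding ν c Tp Tk W P ak D}) (fun _ _ h => measure_mono h)
    mixedNonexpanding_empty hYfin (fun D hD => measure_mono (hD.subset.trans hWY))
    fun f hf hfF => ⟨_, MixedNonexpanding.iUnion hf hfF, Set.subset_iUnion f⟩
  have hB := hD.measure_sdiff_lt hPm hWY hPY hamp hgapW
  have hDP := hD.measure_inter_lt hPm hPY hPspr hgapP
  set V := W \ (D \ P)
  have hVY : V ⊆ Y := Set.sdiff_subset.trans hWY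
  have hYV : ν (Y \ V) ≤ ν (Y \ W) + ak := by
    have hcover : Y \ V ⊆ (Y \ W) ∪ (D \ P) := by
      intro x ⟨hxY, hxV⟩
      by_cases hxW : x ∈ W
      · exact Or.inr (by simpa [V, hxW] using hxV)
      · exact Or.inl ⟨hxY, hxW⟩
    calc ν (Y \ V) ≤ ν (Y \ W) + ν (D \ P) := (measure_mono hcover).trans (measure_union_le _ _)
      _ ≤ ν (Y \ W) + ak := by gcongr
  refine ⟨V, hWm.diff (hD.measurableSet.diff hPm), fun x hx => ⟨hPW hx, fun h => h.2 hx⟩,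
    Set.sdiff_subset, hYV, fun A hAm hAV hA0 hAhalf => ?_⟩
  rcases le_total (ν A) ak with hAsmall | hAlarge
  · exact hD.lt_measure_finSMul_of_maximal hDmax hWm
      (ne_top_of_le_ne_top hYfin (measure_mono hWY)) hPm hPW hT hTk hak hPexp hPsmall hB.le
      hDP.le hAm hAV hA0 hAsmall
  · refine (hamp.restrict hVY).lt_measure_finSMul hVY (hgapW.trans_le' ?_) hAm hAV hAlarge
      hAhalf
    calc (1 + ENNReal.ofReal c) * (ν Y / 2) + (ν (Y \ V) + ak)
        ≤ (1 + ENNReal.ofReal c) * (2 * ak + ν Y / 2) + (ν (Y \ W) + ak + ak) := by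
          gcongr
          exact le_add_self
      _ = _ := by rw [add_assoc, ← two_mul]

end Stage

/-- With `η = (1 - c) / 32 · y`, all error terms of the construction fit into the slack
`(1 - c) / 2 · y` between `y` and `(1 + c) · y / 2`. -/
theorem gap_of_lt_one {c : ℝ} (hc0 : 0 < c) (hc1 : c < 1) {y : ℝ≥0∞} (hy0 : y ≠ 0)
    (hy : y ≠ ∞) :
    (1 + ENNReal.ofReal c) * (2 * (ENNReal.ofReal ((1 - c) / 32) * y) + y / 2) +
        (ENNReal.ofReal ((1 - c) / 32) * y + 2 * (ENNReal.ofReal ((1 - c) / 32) * y)) < y ∧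
      6 * (ENNReal.ofReal ((1 - c) / 32) * y) ≤ y := by
  have ht : 0 < y.toReal := ENNReal.toReal_pos hy0 hy
  rw [← ENNReal.ofReal_toReal hy]
  generalize y.toReal = t at ht
  have hr : 0 < (1 - c) / 32 := by linarith
  generalize hr_def : (1 - c) / 32 = r at hr ⊢
  have h1 : (1 + ENNReal.ofReal c) * (2 * (ENNReal.ofReal r * ENNReal.ofReal t) +
      ENNReal.ofReal t / 2) + (ENNReal.ofReal r * ENNReal.ofReal t +
      2 * (ENNReal.ofReal r * ENNReal.ofReal t)) =
      ENNReal.ofReal ((1 + c) * (2 * (r * t) + t / 2) + (r * t + 2 * (r * t))) := by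
    simp (disch := positivity) only [ENNReal.ofReal_add, ENNReal.ofReal_mul,
      ENNReal.ofReal_div_of_pos, ENNReal.ofReal_one, ENNReal.ofReal_ofNat]
  have h2 : 6 * (ENNReal.ofReal r * ENNReal.ofReal t) = ENNReal.ofReal (6 * (r * t)) := by
    simp (disch := positivity) only [ENNReal.ofReal_mul, ENNReal.ofReal_ofNat]
  rw [h1, h2, ENNReal.ofReal_lt_ofReal_iff ht, ENNReal.ofReal_le_ofReal_iff ht.le]
  subst hr_def
  constructor <;>
    nlinarith [mul_pos ht (sub_pos.2 hc1), mul_pos (mul_pos ht (sub_pos.2 hc1)) hc0]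

section Exhaustion

variable {Γ X : Type*} [Group Γ] [MulAction Γ X] [MeasurableSpace X] [MeasurableConstSMul Γ X]
  {ν : Measure X} {Y W P : Set X} {Tp Tk : Finset Γ} {c : ℝ} {ak ap η : ℝ≥0∞}

theorem four_mul_le_measure (hYfin : ν Y ≠ ∞) (hP : ν (Y \ P) ≤ η + ap) (hap : ap ≤ η)
    (h6 : 6 * η ≤ ν Y) : 4 * ap ≤ ν P := by
  by_contra! h
  have hfin : ν (Y \ P) ≠ ∞ := ne_top_of_le_ne_top hYfin (measure_mono Set.sdiff_subset)
  refine (h6.trans (measure_le_inter_add_sdiff ν Y P)).not_gt ?_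
  calc ν (Y ∩ P) + ν (Y \ P) < 4 * ap + (η + ap) :=
        ENNReal.add_lt_add_of_lt_of_le hfin ((measure_mono Set.inter_subset_right).trans_lt h) hP
    _ ≤ 4 * η + (η + η) := by gcongr
    _ = 6 * η := by ring

theorem exists_expandsOn_between_of_measure_sdiff_le (hWm : MeasurableSet W)
    (hPm : MeasurableSet P) (hPW : P ⊆ W) (hWY : W ⊆ Y) (hYfin : ν Y ≠ ∞) (hT : Tp ⊆ Tk)
    (hTk : (1 : Γ) ∈ Tk) (hak : ak ≤ ap) (hap : ap ≤ η) (hPexp : ExpandsOn ν P c Tp)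
    (hTpspr : Spreads ν Y Y Tp ap ap) (hTkspr : Spreads ν Y Y Tk ak ak)
    (hP : ν (Y \ P) ≤ η + ap) (hW : ν (Y \ W) ≤ η)
    (hgap : (1 + ENNReal.ofReal c) * (2 * η + ν Y / 2) + (η + 2 * η) < ν Y) (h6 : 6 * η ≤ ν Y) :
    ∃ V, MeasurableSet V ∧ P ⊆ V ∧ V ⊆ W ∧ ν (Y \ V) ≤ ν (Y \ W) + ak ∧
      ExpandsOn ν V c Tk := by
  have hPsmall (A : Set X) (_ : A ⊆ P) (hA : ν A ≤ 2 * ap) : ν A ≤ ν P / 2 := by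
    refine hA.trans ((ENNReal.le_div_iff_mul_le (by simp) (by simp)).2 ?_)
    calc 2 * ap * 2 = 4 * ap := by ring
      _ ≤ ν P := four_mul_le_measure hYfin hP hap h6
  refine exists_expandsOn_between hWm hPm hPW hWY hYfin hT hTk hak hPexp
    (hTpspr.restrict (hPW.trans hWY)) hPsmall hTkspr (hgap.trans_le' ?_) (hgap.trans_le' ?_)
  · gcongr (1 + ENNReal.ofReal c) * (2 * ?_ + ν Y / 2) + ?_
    · exact hak.trans hap
    · calc ν (Y \ P) + ap ≤ η + ap + ap := by gcongr
        _ ≤ η + 2 * η := by rw [add_assoc, ← two_mul]; gcongr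
  · have hakη := hak.trans hap
    gcongr

theorem exists_monotone_expandsOn (hYm : MeasurableSet Y) (hY0 : ν Y ≠ 0) (hYfin : ν Y ≠ ∞)
    (hdom : AsymExpDomain Γ ν Y) (hc0 : 0 < c) (hc1 : c < 1) {W : ℕ → Set X}
    (hWm : ∀ n, MeasurableSet (W n)) (hW : Monotone W) (hWY : ∀ n, W n ⊆ Y)
    (hWη : ∀ n, ν (Y \ W n) ≤ ENNReal.ofReal ((1 - c) / 32) * ν Y)
    (hWlim : Tendsto (fun n => ν (Y \ W n)) atTop (𝓝 0)) :
    ∃ (V : ℕ → Set X) (T : ℕ → Finset Γ), Monotone V ∧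
      Tendsto (fun n => ν (Y \ V n)) atTop (𝓝 0) ∧
      ∀ n, MeasurableSet (V n) ∧ V n ⊆ W n ∧ 0 < ν (V n) ∧ SymmFin (T n) ∧
        ExpandsOn ν (V n) c (T n) := by
  classical
  obtain ⟨hgap, h6⟩ := gap_of_lt_one hc0 hc1 hY0 hYfin
  obtain ⟨T, a, hT, ha, hlim, ha0, haη, hTsymm, hTspr⟩ :=
    hdom.exists_spreads_seq hYm hY0 hYfin (ε := (1 - c) / 32) (by linarith) (by linarith)
  have hgap₀ : (1 + ENNReal.ofReal c) * (2 * a 0 + ν Y / 2) + (ν (Y \ W 0) + 2 * a 0) < ν Y := by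
    refine hgap.trans_le' ?_
    gcongr
    exacts [haη 0, hWη 0, haη 0]
  obtain ⟨V₀, hV₀m, -, hV₀W, hV₀Y, hV₀exp⟩ := exists_expandsOn_between (P := ∅) (bp := 0)
    (hWm 0) .empty (Set.empty_subset _) (hWY 0) hYfin subset_rfl (hTsymm 0).1 le_rfl
    expandsOn_empty (spreads_empty (ha0 0)) (by simp) (hTspr 0)
    (lt_of_le_of_lt (by simp) hgap₀) hgap₀
  have hstep (n : ℕ) (V : Set X) : MeasurableSet V ∧ V ⊆ W n ∧ ν (Y \ V) ≤ ν (Y \ W n) + a n ∧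
      ExpandsOn ν V c (T n) → ∃ V', V ⊆ V' ∧ MeasurableSet V' ∧ V' ⊆ W (n + 1) ∧
        ν (Y \ V') ≤ ν (Y \ W (n + 1)) + a (n + 1) ∧ ExpandsOn ν V' c (T (n + 1)) := by
    rintro ⟨hVm, hVW, hVY, hVexp⟩
    obtain ⟨V', hV'm, hVV', hV'W, hV'Y, hV'exp⟩ :=
      exists_expandsOn_between_of_measure_sdiff_le (hWm (n + 1)) hVm (hVW.trans (hW n.le_succ))
        (hWY _) hYfin (hT n.le_succ) (hTsymm _).1 (ha n.le_succ) (haη n) hVexp (hTspr n)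
        (hTspr (n + 1)) (hVY.trans (by gcongr; exact hWη n)) (hWη _) hgap h6
    exact ⟨V', hVV', hV'm, hV'W, hV'Y, hV'exp⟩
  obtain ⟨V, hV, hVQ⟩ := exists_monotone_seq ⟨hV₀m, hV₀W, hV₀Y, hV₀exp⟩ hstep
  refine ⟨V, T, hV, ?_, fun n => ⟨(hVQ n).1, (hVQ n).2.1, ?_, hTsymm n, (hVQ n).2.2.2⟩⟩
  · exact tendsto_of_tendsto_of_tendsto_of_le_of_le tendsto_const_nhds
      (by simpa using hWlim.add hlim) (fun _ => zero_le) fun n => (hVQ n).2.2.1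
  · exact (pos_iff_ne_zero.2 (mul_ne_zero four_ne_zero (ha0 n))).trans_le
      (four_mul_le_measure hYfin ((hVQ n).2.2.1.trans (by gcongr; exact hWη n)) (haη n) h6)

end Exhaustion

theorem exhaustion_by_expansion_domains_avoiding_general
    {Γ X : Type*} [Group Γ] [MulAction Γ X] [MeasurableSpace X]
    (ν : Measure X)
    (hmeas : ∀ γ : Γ, Measurable fun x : X => γ • x)
    (Y : Set X) (hYm : MeasurableSet Y) (hY0 : 0 < ν Y) (hYfin : ν Y < ⊤)
    (hdom : AsymExpDomain Γ ν Y)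
    (c : ℝ) (hc0 : 0 < c) (hc1 : c < 1)
    (Z : ℕ → Set X) (hZm : ∀ n, MeasurableSet (Z n))
    (hZdec : Antitone Z)
    (hZ0 : Filter.Tendsto (fun n => ν (Z n)) Filter.atTop (nhds 0)) :
    ∃ N₀ : ℕ, ∃ S : ℕ → Finset Γ, ∃ Yseq : ℕ → Set X,
      (∀ m n : ℕ, N₀ < m → m ≤ n → Yseq m ⊆ Yseq n) ∧
      (∀ n : ℕ, N₀ < n → MeasurableSet (Yseq n) ∧ Yseq n ⊆ Y \ Z n ∧
        0 < ν (Yseq n) ∧ SymmFin (S n) ∧ ExpandsOn ν (Yseq n) c (S n)) ∧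
      ν (Y \ ⋃ n, ⋃ (_ : N₀ < n), Yseq n) = 0 := by
  have : MeasurableConstSMul Γ X := ⟨hmeas⟩
  have hη : 0 < ENNReal.ofReal ((1 - c) / 32) * ν Y :=
    ENNReal.mul_pos (by simpa using hc1) hY0.ne'
  obtain ⟨N₀, hN₀⟩ := ENNReal.tendsto_atTop_zero.1 hZ0 _ hη
  have hYZ (n : ℕ) : ν (Y \ (Y \ Z (max n N₀))) ≤ ν (Z (max n N₀)) :=
    measure_mono (by rw [Set.sdiff_sdiff_right_self]; exact Set.inter_subset_right)
  obtain ⟨V, T, hV, hVlim, hVW⟩ := exists_monotone_expandsOn hYm hY0.ne' hYfin.ne hdom hc0 hc1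
    (W := fun n => Y \ Z (max n N₀)) (fun n => hYm.diff (hZm _))
    (fun m n h => Set.sdiff_subset_sdiff_right (hZdec (max_le_max h le_rfl)))
    (fun n => Set.sdiff_subset) (fun n => (hYZ n).trans (hN₀ _ (le_max_right _ _)))
    (tendsto_of_tendsto_of_tendsto_of_le_of_le' tendsto_const_nhds hZ0
      (Eventually.of_forall fun _ => zero_le)
      ((eventually_ge_atTop N₀).mono fun n hn => by simpa [max_eq_left hn] using hYZ n))
  refine ⟨N₀, T, V, fun m n _ h => hV h, fun n hn => ?_, ?_⟩
  · obtain ⟨hVm, hVW, hV0⟩ := hVW n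
    rw [max_eq_left hn.le] at hVW
    exact ⟨hVm, hVW, hV0⟩
  · refine le_antisymm (ge_of_tendsto hVlim ((eventually_gt_atTop N₀).mono fun n hn => ?_)) zero_le
    exact measure_mono (Set.sdiff_subset_sdiff_right (Set.subset_biUnion_of_mem (u := V) hn))

/-- Proposition 4.5: a domain of asymptotic expansion admits an
exhaustion by domains of `(c,S_n)`-expansion avoiding a prescribed shrinking sequence of
subsets. -/
theorem exhaustion_by_expansion_domains_avoiding
    {Γ X : Type*} [Group Γ] [Countable Γ] [MulAction Γ X] [MeasurableSpace X]
    (ν : Measure X)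
    (hmeas : ∀ γ : Γ, Measurable fun x : X => γ • x)
    (Y : Set X) (hYm : MeasurableSet Y) (hY0 : 0 < ν Y) (hYfin : ν Y < ⊤)
    (hdom : AsymExpDomain Γ ν Y)
    (c : ℝ) (hc0 : 0 < c) (hc1 : c < 1)
    (Z : ℕ → Set X) (hZm : ∀ n, MeasurableSet (Z n)) (hZsub : ∀ n, Z n ⊆ Y)
    (hZdec : Antitone Z)
    (hZ0 : Filter.Tendsto (fun n => ν (Z n)) Filter.atTop (nhds 0)) :
    ∃ N₀ : ℕ, ∃ S : ℕ → Finset Γ, ∃ Yseq : ℕ → Set X,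
      (∀ m n : ℕ, N₀ < m → m ≤ n → Yseq m ⊆ Yseq n) ∧
      (∀ n : ℕ, N₀ < n → MeasurableSet (Yseq n) ∧ Yseq n ⊆ Y \ Z n ∧
        0 < ν (Yseq n) ∧ SymmFin (S n) ∧ ExpandsOn ν (Yseq n) c (S n)) ∧
      ν (Y \ ⋃ n, ⋃ (_ : N₀ < n), Yseq n) = 0 :=
  exhaustion_by_expansion_domains_avoiding_general ν hmeas Y hYm hY0 hYfin hdom c hc0 hc1 Z hZm
    hZdec hZ0
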